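/- Let φ: (X,𝓔) → (Y,𝓕) be a coarse equivalence with coarse inverse ψ, and let C be an asymptotic cut between φ(A) and φ(B) in Y, where A, B ⊆ X are asymptotically disjoint. Then ψ(C) is an asymptotic cut between A and B in X. -/
import Mathlib


/-- A (unitary, connected) coarse structure on a set `X`. -/
structure CoarseStruct (X : Type*) where
  sets : Set (Set (X × X))
  subset_mem : ∀ E ∈ sets, ∀ E' ⊆ E, E' ∈ sets
  union_mem : ∀ E ∈ sets, ∀ F ∈ sets, E ∪ F ∈ sets
  inv_mem : ∀ E ∈ sets, Prod.swap '' E ∈ sets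
  comp_mem : ∀ E ∈ sets, ∀ F ∈ sets,
    {p : X × X | ∃ z : X, (p.1, z) ∈ F ∧ (z, p.2) ∈ E} ∈ sets
  diag_mem : {p : X × X | p.1 = p.2} ∈ sets
  connected : ∀ x y : X, ({(x, y)} : Set (X × X)) ∈ sets

/-- `E(A) = {y : ∃ x ∈ A, (y, x) ∈ E}`. -/
def img {X : Type*} (E : Set (X × X)) (A : Set X) : Set X :=
  {y | ∃ x ∈ A, (y, x) ∈ E}

/-- The AS.R associated to a coarse structure. -/
def lamC {X : Type*} (𝓔 : CoarseStruct X) (A B : Set X) : Prop :=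
  ∃ E ∈ 𝓔.sets, A ⊆ img E B ∧ B ⊆ img E A

/-- Bounded subsets of a coarse space. -/
def BddC {X : Type*} (𝓔 : CoarseStruct X) (B : Set X) : Prop :=
  B ×ˢ B ∈ 𝓔.sets

/-- Asymptotic disjointness in the AS.R associated to a coarse structure. -/
def AsympDisjC {X : Type*} (𝓔 : CoarseStruct X) (A B : Set X) : Prop :=
  ∀ L₁ ⊆ A, ∀ L₂ ⊆ B, lamC 𝓔 L₁ L₂ → BddC 𝓔 L₁ ∧ BddC 𝓔 L₂

/-- `g : ℕ → X` is an `E`-chain of length `n`. -/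
def IsChain' {X : Type*} (E : Set (X × X)) (n : ℕ) (g : ℕ → X) : Prop :=
  ∀ i < n, (g i, g (i + 1)) ∈ E

/-- `C` is an asymptotic cut between the asymptotically disjoint sets `A` and `B`:
`C` is asymptotically disjoint from both and for each entourage `E` there is an
entourage `F` such that every `E`-chain from `A` to `B` meets `F(C)`. -/
def AsympCutC {X : Type*} (𝓔 : CoarseStruct X) (A B C : Set X) : Prop :=
  AsympDisjC 𝓔 C A ∧ AsympDisjC 𝓔 C B ∧
  ∀ E ∈ 𝓔.sets, ∃ F ∈ 𝓔.sets, ∀ (n : ℕ) (g : ℕ → X),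
    g 0 ∈ A → g n ∈ B → IsChain' E n g → ∃ i ≤ n, g i ∈ img F C

/-- `C` is a large scale separator between the asymptotically disjoint sets
`A` and `B`. -/
def LargeScaleSepC {X : Type*} (𝓔 : CoarseStruct X) (A B C : Set X) : Prop :=
  AsympDisjC 𝓔 C A ∧ AsympDisjC 𝓔 C B ∧
  ∃ X₁ X₂ : Set X, X₁ ∪ X₂ = Set.univ ∧
    AsympDisjC 𝓔 X₁ A ∧ AsympDisjC 𝓔 X₂ B ∧
    ∀ L₁ ⊆ X₁, ∀ L₂ ⊆ X₂, lamC 𝓔 L₁ L₂ → ∃ L ⊆ C, lamC 𝓔 L₁ L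

/-- A coarse map between coarse spaces: entourages map to entourages and
preimages of bounded sets are bounded. -/
def CoarseMap {X Y : Type*} (𝓔 : CoarseStruct X) (𝓕 : CoarseStruct Y)
    (f : X → Y) : Prop :=
  (∀ E ∈ 𝓔.sets, (fun p : X × X => (f p.1, f p.2)) '' E ∈ 𝓕.sets) ∧
  ∀ B : Set Y, BddC 𝓕 B → BddC 𝓔 (f ⁻¹' B)

/-- `g` is a coarse inverse of `f`. -/
def CoarseInverse {X Y : Type*} (𝓔 : CoarseStruct X) (𝓕 : CoarseStruct Y)
    (f : X → Y) (g : Y → X) : Prop :=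
  {p : X × X | ∃ x : X, p = (g (f x), x)} ∈ 𝓔.sets ∧
  {p : Y × Y | ∃ y : Y, p = (f (g y), y)} ∈ 𝓕.sets

/-- `f` is a coarse equivalence. -/
def CoarseEquiv {X Y : Type*} (𝓔 : CoarseStruct X) (𝓕 : CoarseStruct Y)
    (f : X → Y) : Prop :=
  CoarseMap 𝓔 𝓕 f ∧ ∃ g : Y → X, CoarseMap 𝓕 𝓔 g ∧ CoarseInverse 𝓔 𝓕 f g

lemma bdd_mono {X : Type*} (𝓔 : CoarseStruct X) {A B : Set X} (h : BddC 𝓔 B)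
    (hs : A ⊆ B) : BddC 𝓔 A :=
  𝓔.subset_mem _ h _ (Set.prod_mono hs hs)

lemma lam_symm {X : Type*} (𝓔 : CoarseStruct X) {A B : Set X} (h : lamC 𝓔 A B) :
    lamC 𝓔 B A := by
  obtain ⟨E, hE, h1, h2⟩ := h; exact ⟨E, hE, h2, h1⟩

lemma lam_trans {X : Type*} (𝓔 : CoarseStruct X) {A B D : Set X}
    (h1 : lamC 𝓔 A B) (h2 : lamC 𝓔 B D) : lamC 𝓔 A D := by
  obtain ⟨E, hE, hAB, hBA⟩ := h1
  obtain ⟨F, hF, hBD, hDB⟩ := h2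
  refine ⟨{p : X × X | ∃ z, (p.1, z) ∈ E ∧ (z, p.2) ∈ F} ∪
      {p : X × X | ∃ z, (p.1, z) ∈ F ∧ (z, p.2) ∈ E},
    𝓔.union_mem _ (𝓔.comp_mem _ hF _ hE) _ (𝓔.comp_mem _ hE _ hF), ?_, ?_⟩
  · intro a ha
    obtain ⟨b, hb, hab⟩ := hAB ha
    obtain ⟨d, hd, hbd⟩ := hBD hb
    exact ⟨d, hd, Or.inl ⟨b, hab, hbd⟩⟩
  · intro d hd
    obtain ⟨b, hb, hdb⟩ := hDB hd
    obtain ⟨a, ha, hba⟩ := hBA hb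
    exact ⟨a, ha, Or.inr ⟨b, hdb, hba⟩⟩

lemma lam_image {X Y : Type*} (𝓔 : CoarseStruct X) (𝓕 : CoarseStruct Y) (f : X → Y)
    (hf : ∀ E ∈ 𝓔.sets, (fun p : X × X => (f p.1, f p.2)) '' E ∈ 𝓕.sets)
    {A B : Set X} (h : lamC 𝓔 A B) : lamC 𝓕 (f '' A) (f '' B) := by
  obtain ⟨E, hE, hAB, hBA⟩ := h
  refine ⟨_, hf E hE, ?_, ?_⟩
  · rintro _ ⟨a, ha, rfl⟩
    obtain ⟨b, hb, hab⟩ := hAB ha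
    exact ⟨f b, ⟨b, hb, rfl⟩, ⟨(a, b), hab, rfl⟩⟩
  · rintro _ ⟨b, hb, rfl⟩
    obtain ⟨a, ha, hba⟩ := hBA hb
    exact ⟨f a, ⟨a, ha, rfl⟩, ⟨(b, a), hba, rfl⟩⟩

lemma bdd_image {X Y : Type*} (𝓔 : CoarseStruct X) (𝓕 : CoarseStruct Y) (f : X → Y)
    (hf : ∀ E ∈ 𝓔.sets, (fun p : X × X => (f p.1, f p.2)) '' E ∈ 𝓕.sets)
    {B : Set X} (h : BddC 𝓔 B) : BddC 𝓕 (f '' B) := by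
  have := hf _ h
  refine 𝓕.subset_mem _ this _ ?_
  rintro ⟨a, b⟩ ⟨⟨a0, ha0, rfl⟩, ⟨b0, hb0, rfl⟩⟩
  exact ⟨(a0, b0), ⟨ha0, hb0⟩, rfl⟩

/-- If `φ` is a coarse equivalence with coarse inverse `ψ`, `A, B` are
asymptotically disjoint subsets of `X`, and `C` is an asymptotic cut between
`φ(A)` and `φ(B)` in `Y`, then `ψ(C)` is an asymptotic cut between `A` and `B`. -/
theorem image_asympCut {X Y : Type*} (𝓔 : CoarseStruct X) (𝓕 : CoarseStruct Y)
    (φ : X → Y) (ψ : Y → X) (hφ : CoarseMap 𝓔 𝓕 φ) (hψ : CoarseMap 𝓕 𝓔 ψ)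
    (hinv : CoarseInverse 𝓔 𝓕 φ ψ) (A B : Set X) (hAB : AsympDisjC 𝓔 A B)
    (C : Set Y) (hC : AsympCutC 𝓕 (φ '' A) (φ '' B) C) :
    AsympCutC 𝓔 A B (ψ '' C) := by
  obtain ⟨hφE, hφB⟩ := hφ
  obtain ⟨hψE, hψB⟩ := hψ
  obtain ⟨hG1, hG2⟩ := hinv
  obtain ⟨hCA, hCB, hChain⟩ := hC
  -- the "closeness" entourage in Y and its symmetrization
  set G : Set (Y × Y) := {p : Y × Y | ∃ y : Y, p = (φ (ψ y), y)} with hGdef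
  have hE₀ : G ∪ Prod.swap '' G ∈ 𝓕.sets :=
    𝓕.union_mem _ hG2 _ (𝓕.inv_mem _ hG2)
  -- main disjointness step
  have disj : ∀ S : Set X, AsympDisjC 𝓕 C (φ '' S) → AsympDisjC 𝓔 (ψ '' C) S := by
    intro S hS L₁ hL₁ L₂ hL₂ hlam
    set C' : Set Y := {y ∈ C | ψ y ∈ L₁} with hC'def
    have hC'sub : C' ⊆ C := fun y hy => hy.1
    have hψC' : ψ '' C' = L₁ := by
      apply Set.Subset.antisymm
      · rintro _ ⟨y, hy, rfl⟩; exact hy.2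
      · intro x hx
        obtain ⟨y, hy, rfl⟩ := hL₁ hx
        exact ⟨y, ⟨hy, hx⟩, rfl⟩
    have lam1 : lamC 𝓕 (φ '' L₁) C' := by
      refine ⟨G ∪ Prod.swap '' G, hE₀, ?_, ?_⟩
      · rintro _ ⟨x, hx, rfl⟩
        rw [← hψC'] at hx
        obtain ⟨y, hy, rfl⟩ := hx
        exact ⟨y, hy, Or.inl ⟨y, rfl⟩⟩
      · intro y hy
        refine ⟨φ (ψ y), ⟨ψ y, hy.2, rfl⟩, Or.inr ⟨(φ (ψ y), y), ⟨y, rfl⟩, rfl⟩⟩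
    have lam2 : lamC 𝓕 (φ '' L₁) (φ '' L₂) := lam_image 𝓔 𝓕 φ hφE hlam
    have lam3 : lamC 𝓕 C' (φ '' L₂) := lam_trans 𝓕 (lam_symm 𝓕 lam1) lam2
    obtain ⟨bC', bL₂⟩ := hS C' hC'sub (φ '' L₂) (Set.image_mono hL₂) lam3
    constructor
    · rw [← hψC']
      exact bdd_image 𝓕 𝓔 ψ hψE bC'
    · exact bdd_mono 𝓔 (hφB _ bL₂) (Set.subset_preimage_image φ L₂)
  refine ⟨disj A hCA, disj B hCB, ?_⟩
  intro E hE
  obtain ⟨F, hF, hF'⟩ := hChain _ (hφE E hE) 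
  -- transported entourage in X
  set Gx : Set (X × X) := {p : X × X | ∃ x : X, p = (ψ (φ x), x)} with hGxdef
  refine ⟨{p : X × X | ∃ z, (p.1, z) ∈ Prod.swap '' Gx ∧
      (z, p.2) ∈ (fun p : Y × Y => (ψ p.1, ψ p.2)) '' F}, ?_, ?_⟩
  · exact 𝓔.comp_mem _ (hψE F hF) _ (𝓔.inv_mem _ hG1)
  · intro n g hg0 hgn hchain
    obtain ⟨i, hi, c, hc, hfc⟩ := hF' n (fun j => φ (g j)) ⟨g 0, hg0, rfl⟩
      ⟨g n, hgn, rfl⟩ (fun j hj => ⟨(g j, g (j + 1)), hchain j hj, rfl⟩)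
    refine ⟨i, hi, ψ c, ⟨c, hc, rfl⟩, ?_⟩
    exact ⟨ψ (φ (g i)), ⟨(ψ (φ (g i)), g i), ⟨g i, rfl⟩, rfl⟩,
      ⟨(φ (g i), c), hfc, rfl⟩⟩
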